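/- arXiv:1010.1600 — 4 statements merged into one kernel-verified Lean document; each statement's English description precedes it below -/
import Mathlib

section
/- Let X be a normal topometric space, let S ⊆ ℝ be finite, and let {(F_α, G_α) : α ∈ S} be a finite partial c-Lipschitz approximation (i.e., F_α, G_α are closed and d(F_α, G_β)·c > β − α for α < β in S). Then for any β ∈ S there exist closed sets F'_β ⊇ F_β and G'_β ⊇ G_β with F'_β ∪ G'_β = X such that replacing (F_β, G_β) by (F'_β, G'_β) again yields a partial c-Lipschitz approximation. -/
open scoped ENNReal NNReal
open Set

structure TopometricOn (X : Type*) [TopologicalSpace X] where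
  d : X → X → ℝ≥0∞
  d_self : ∀ x, d x x = 0
  eq_of_d_eq_zero : ∀ x y, d x y = 0 → x = y
  d_symm : ∀ x y, d x y = d y x
  d_triangle : ∀ x y z, d x z ≤ d x y + d y z
  lsc : LowerSemicontinuous fun p : X × X => d p.1 p.2
  refines : ∀ U : Set X, IsOpen U → ∀ x ∈ U, ∃ ε > (0 : ℝ≥0∞), ∀ y, d x y < ε → y ∈ U

namespace TopometricOn

variable {X : Type*} [TopologicalSpace X]

noncomputable def setD (T : TopometricOn X) (F G : Set X) : ℝ≥0∞ :=
  ⨅ x ∈ F, ⨅ y ∈ G, T.d x y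

noncomputable def ptD (T : TopometricOn X) (x : X) (F : Set X) : ℝ≥0∞ :=
  ⨅ y ∈ F, T.d x y

def IsNormal (T : TopometricOn X) : Prop :=
  (∀ F G : Set X, IsClosed F → IsClosed G → 0 < T.setD F G →
      ∃ U V : Set X, IsOpen U ∧ IsOpen V ∧ F ⊆ U ∧ G ⊆ V ∧ Disjoint U V) ∧
  (∀ F : Set X, IsClosed F → ∀ r : ℝ≥0∞, 0 < r → IsClosed {x | T.ptD x F ≤ r})

end TopometricOn

/-!
Write `q α γ = (γ - α) / c`, so that the approximation condition reads `q α γ < d(F α, G γ)` and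
`q α β + q β γ = q α γ`. As `S` is finite, a single `η > 0` gives `q α γ + 3η < d(F α, G γ)` for
all `α < γ` in `S`; by the triangle inequality the closed sets `L = ⋃_{α < β} B̄(F α, q α β + η)`
and `K = ⋃_{γ > β} B̄(G γ, q β γ + η)` are then `η` apart. Normality separates them by disjoint
open sets `U ⊇ L`, `V ⊇ K`, and `F' = F β ∪ Vᶜ`, `G' = G β ∪ Uᶜ` work: they cover `X` since
`U ∩ V = ∅`, `Vᶜ` is more than `q β γ` away from `G γ`, and `Uᶜ` more than `q α β` from `F α`.
-/

open Filter Topology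

theorem ENNReal.ofReal_sub_add_ofReal_sub {α β γ : ℝ} (hαβ : α ≤ β) (hβγ : β ≤ γ) :
    ENNReal.ofReal (β - α) + ENNReal.ofReal (γ - β) = ENNReal.ofReal (γ - α) := by
  rw [← ENNReal.ofReal_add (by linarith) (by linarith)]
  ring_nf

theorem ENNReal.eventually_add_mul_lt {a b : ℝ≥0∞} (h : a < b) (k : ℝ≥0) :
    ∀ᶠ η : ℝ≥0 in 𝓝 0, a + k * η < b := by
  have : Tendsto (fun η : ℝ≥0 => a + k * (η : ℝ≥0∞)) (𝓝 0) (𝓝 (a + k * ((0 : ℝ≥0) : ℝ≥0∞))) :=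
    tendsto_const_nhds.add
      (ENNReal.Tendsto.const_mul (ENNReal.tendsto_coe.2 tendsto_id) (Or.inr ENNReal.coe_ne_top))
  rw [ENNReal.coe_zero, mul_zero, add_zero] at this
  exact this.eventually (gt_mem_nhds h)

theorem ENNReal.exists_pos_forall₂_add_mul_lt {ι : Type*} (s : Finset ι) (r : ι → ι → Prop)
    {a b : ι → ι → ℝ≥0∞} (h : ∀ i ∈ s, ∀ j ∈ s, r i j → a i j < b i j) (k : ℝ≥0) :
    ∃ η : ℝ≥0, 0 < η ∧ ∀ i ∈ s, ∀ j ∈ s, r i j → a i j + k * η < b i j := by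
  refine (Eventually.and self_mem_nhdsWithin ?_).exists (f := 𝓝[>] 0)
  simp only [eventually_all_finset, eventually_imp_distrib_left]
  exact fun i hi j hj hij =>
    (ENNReal.eventually_add_mul_lt (h i hi j hj hij) k).filter_mono nhdsWithin_le_nhds

namespace TopometricOn

variable {X : Type*} [TopologicalSpace X] (T : TopometricOn X)

def cthickening (A : Set X) (r : ℝ≥0∞) : Set X := {x | T.ptD x A ≤ r}

theorem setD_le_d {A B : Set X} {x y : X} (hx : x ∈ A) (hy : y ∈ B) : T.setD A B ≤ T.d x y :=
  (iInf₂_le x hx).trans (iInf₂_le y hy)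

theorem le_setD {A B : Set X} {r : ℝ≥0∞} (h : ∀ x ∈ A, ∀ y ∈ B, r ≤ T.d x y) : r ≤ T.setD A B :=
  le_iInf₂ fun x hx => le_iInf₂ fun y hy => h x hx y hy

theorem setD_comm (A B : Set X) : T.setD A B = T.setD B A :=
  le_antisymm (T.le_setD fun y hy x hx => (T.setD_le_d hx hy).trans_eq (T.d_symm x y))
    (T.le_setD fun x hx y hy => (T.setD_le_d hy hx).trans_eq (T.d_symm y x))

theorem setD_union_left (A A' B : Set X) : T.setD (A ∪ A') B = T.setD A B ⊓ T.setD A' B := by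
  simp only [setD, iInf_union]

theorem setD_union_right (A B B' : Set X) : T.setD A (B ∪ B') = T.setD A B ⊓ T.setD A B' := by
  rw [setD_comm, setD_union_left, setD_comm, T.setD_comm B']

theorem setD_le_ptD_add_d_add_ptD (A B : Set X) (x y : X) :
    T.setD A B ≤ T.ptD x A + T.d x y + T.ptD y B := by
  simp only [ptD, ENNReal.iInf₂_add, ENNReal.add_iInf₂]
  refine le_iInf₂ fun g hg => le_iInf₂ fun f hf => ?_
  calc T.setD A B ≤ T.d f g := T.setD_le_d hf hg
    _ ≤ T.d f y + T.d y g := T.d_triangle f y g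
    _ ≤ T.d f x + T.d x y + T.d y g := by gcongr; exact T.d_triangle f x y
    _ = T.d x f + T.d x y + T.d y g := by rw [T.d_symm f x]

theorem le_setD_cthickening {A B : Set X} {a b η : ℝ≥0∞} (h : a + b + η < T.setD A B) :
    η ≤ T.setD (T.cthickening A a) (T.cthickening B b) := by
  have hab : a + b ≠ ⊤ := (ENNReal.add_ne_top.1 h.ne_top).1
  refine T.le_setD fun x hx y hy => (ENNReal.add_le_add_iff_left hab).1 ?_
  calc a + b + η ≤ T.setD A B := h.le
    _ ≤ T.ptD x A + T.d x y + T.ptD y B := T.setD_le_ptD_add_d_add_ptD A B x y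
    _ ≤ a + T.d x y + b := by gcongr <;> assumption
    _ = a + b + T.d x y := add_right_comm _ _ _

theorem le_setD_of_disjoint_cthickening {A B : Set X} {r : ℝ≥0∞}
    (h : Disjoint A (T.cthickening B r)) : r ≤ T.setD A B :=
  T.le_setD fun _ hx y hy =>
    (not_le.1 (Set.disjoint_left.1 h hx)).le.trans (iInf₂_le y hy)

theorem le_setD_biUnion {ι κ : Type*} {s : Set ι} {t : Set κ} {A : ι → Set X} {B : κ → Set X}
    {r : ℝ≥0∞} (h : ∀ i ∈ s, ∀ j ∈ t, r ≤ T.setD (A i) (B j)) :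
    r ≤ T.setD (⋃ i ∈ s, A i) (⋃ j ∈ t, B j) := by
  refine T.le_setD fun x hx y hy => ?_
  obtain ⟨i, hi, hxi⟩ := Set.mem_iUnion₂.1 hx
  obtain ⟨j, hj, hyj⟩ := Set.mem_iUnion₂.1 hy
  exact (h i hi j hj).trans (T.setD_le_d hxi hyj)

variable {T} in
theorem IsNormal.exists_isOpen_disjoint_cthickening (hT : T.IsNormal) {ι κ : Type*}
    {s : Finset ι} {t : Finset κ} {A : ι → Set X} {B : κ → Set X}
    (hA : ∀ i ∈ s, IsClosed (A i)) (hB : ∀ j ∈ t, IsClosed (B j)) {a : ι → ℝ≥0∞} {b : κ → ℝ≥0∞}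
    (ha : ∀ i ∈ s, 0 < a i) (hb : ∀ j ∈ t, 0 < b j) {η : ℝ≥0∞} (hη : 0 < η)
    (h : ∀ i ∈ s, ∀ j ∈ t, a i + b j + η < T.setD (A i) (B j)) :
    ∃ U V : Set X, IsOpen U ∧ IsOpen V ∧ Disjoint U V ∧
      (∀ i ∈ s, T.cthickening (A i) (a i) ⊆ U) ∧ (∀ j ∈ t, T.cthickening (B j) (b j) ⊆ V) := by
  obtain ⟨U, V, hU, hV, hAU, hBV, hUV⟩ :=
    hT.1 (⋃ i ∈ s, T.cthickening (A i) (a i)) (⋃ j ∈ t, T.cthickening (B j) (b j))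
      (isClosed_biUnion_finset fun i hi => hT.2 _ (hA i hi) _ (ha i hi))
      (isClosed_biUnion_finset fun j hj => hT.2 _ (hB j hj) _ (hb j hj))
      (hη.trans_le (T.le_setD_biUnion fun i hi j hj => T.le_setD_cthickening (h i hi j hj)))
  exact ⟨U, V, hU, hV, hUV,
    fun i hi => (subset_biUnion_of_mem (u := fun i => T.cthickening (A i) (a i)) hi).trans hAU,
    fun j hj => (subset_biUnion_of_mem (u := fun j => T.cthickening (B j) (b j)) hj).trans hBV⟩

variable {T} in
theorem IsNormal.exists_isOpen_disjoint_lt_setD_compl (hT : T.IsNormal) {ι : Type*} [Preorder ι]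
    {S : Finset ι} {F G : ι → Set X} (hF : ∀ α ∈ S, IsClosed (F α))
    (hG : ∀ α ∈ S, IsClosed (G α)) {q : ι → ι → ℝ≥0∞} {β : ι} (hβ : β ∈ S)
    (hq_add : ∀ α γ, α < β → β < γ → q α β + q β γ ≤ q α γ)
    (hq : ∀ α ∈ S, ∀ γ ∈ S, α < γ → q α γ < T.setD (F α) (G γ)) :
    ∃ U V : Set X, IsOpen U ∧ IsOpen V ∧ Disjoint U V ∧
      (∀ α ∈ S, α < β → q α β < T.setD (F α) Uᶜ) ∧ (∀ γ ∈ S, β < γ → q β γ < T.setD Vᶜ (G γ)) := by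
  classical
  obtain ⟨η, hη0, hη⟩ := ENNReal.exists_pos_forall₂_add_mul_lt S (· < ·) hq 3
  have hη_pos : (0 : ℝ≥0∞) < η := ENNReal.coe_pos.2 hη0
  obtain ⟨U, V, hU, hV, hUV, hFU, hGV⟩ := hT.exists_isOpen_disjoint_cthickening
    (s := S.filter (· < β)) (t := S.filter (β < ·)) (a := fun α => q α β + η)
    (b := fun γ => q β γ + η) (fun α hα => hF α (Finset.mem_filter.1 hα).1)
    (fun γ hγ => hG γ (Finset.mem_filter.1 hγ).1) (fun _ _ => hη_pos.trans_le le_add_self)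
    (fun _ _ => hη_pos.trans_le le_add_self) hη_pos fun α hα γ hγ => by
      obtain ⟨hα, hαβ⟩ := Finset.mem_filter.1 hα
      obtain ⟨hγ, hβγ⟩ := Finset.mem_filter.1 hγ
      calc q α β + η + (q β γ + η) + η = q α β + q β γ + (3 : ℝ≥0) * η := by
            push_cast
            ring
        _ ≤ q α γ + (3 : ℝ≥0) * η := by gcongr; exact hq_add α γ hαβ hβγ
        _ < T.setD (F α) (G γ) := hη α hα γ hγ (hαβ.trans hβγ)
  refine ⟨U, V, hU, hV, hUV, fun α hα hαβ => ?_, fun γ hγ hβγ => ?_⟩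
  · rw [setD_comm]
    refine (ENNReal.lt_add_right (hq α hα β hβ hαβ).ne_top hη_pos.ne').trans_le
      (T.le_setD_of_disjoint_cthickening (disjoint_compl_left.mono_right ?_))
    exact hFU α (Finset.mem_filter.2 ⟨hα, hαβ⟩)
  · refine (ENNReal.lt_add_right (hq β hβ γ hγ hβγ).ne_top hη_pos.ne').trans_le
      (T.le_setD_of_disjoint_cthickening (disjoint_compl_left.mono_right ?_))
    exact hGV γ (Finset.mem_filter.2 ⟨hγ, hβγ⟩)

end TopometricOn

/-- extending one pair of a finite partial `c`-Lipschitz approximation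
to a total pair, in a normal topometric space. -/
theorem partial_approximation_extension {X : Type*} [TopologicalSpace X]
    (T : TopometricOn X) (hT : T.IsNormal) (S : Finset ℝ) (F G : ℝ → Set X) (c : ℝ≥0)
    (hF : ∀ α ∈ S, IsClosed (F α)) (hG : ∀ α ∈ S, IsClosed (G α))
    (happ : ∀ α ∈ S, ∀ β ∈ S, α < β →
      ENNReal.ofReal (β - α) < T.setD (F α) (G β) * (c : ℝ≥0∞))
    (β : ℝ) (hβ : β ∈ S) :
    ∃ F' G' : Set X, IsClosed F' ∧ IsClosed G' ∧ F β ⊆ F' ∧ G β ⊆ G' ∧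
      F' ∪ G' = Set.univ ∧
      (∀ α ∈ S, ∀ γ ∈ S, α < γ →
        ENNReal.ofReal (γ - α) <
          T.setD (Function.update F β F' α) (Function.update G β G' γ) * (c : ℝ≥0∞)) := by
  set q : ℝ → ℝ → ℝ≥0∞ := fun α γ => ENNReal.ofReal (γ - α) / c
  -- no case split on `c = 0` is needed: then `q α γ = ⊤` for `α < γ`, and both sides are false
  have hq_iff {α γ : ℝ} {D : ℝ≥0∞} (h : α < γ) : ENNReal.ofReal (γ - α) < D * c ↔ q α γ < D :=
    (ENNReal.div_lt_iff (Or.inr (by simpa using h)) (Or.inl ENNReal.coe_ne_top)).symm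
  have hq_add (α γ : ℝ) (hαβ : α < β) (hβγ : β < γ) : q α β + q β γ ≤ q α γ :=
    (ENNReal.div_add_div_same.trans
      (by rw [ENNReal.ofReal_sub_add_ofReal_sub hαβ.le hβγ.le])).le
  have hq_lt : ∀ α ∈ S, ∀ γ ∈ S, α < γ → q α γ < T.setD (F α) (G γ) :=
    fun α hα γ hγ h => (hq_iff h).1 (happ α hα γ hγ h)
  obtain ⟨U, V, hU, hV, hUV, hFU, hGV⟩ :=
    hT.exists_isOpen_disjoint_lt_setD_compl hF hG hβ hq_add hq_lt
  refine ⟨F β ∪ Vᶜ, G β ∪ Uᶜ, (hF β hβ).union hV.isClosed_compl,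
    (hG β hβ).union hU.isClosed_compl, subset_union_left, subset_union_left, ?_, ?_⟩
  · rw [union_union_union_comm, ← compl_inter, hUV.symm.inter_eq, compl_empty, union_univ]
  intro α hα γ hγ hαγ
  rw [hq_iff hαγ]
  rcases eq_or_ne α β with rfl | hαβ
  · rw [Function.update_self, Function.update_of_ne hαγ.ne', T.setD_union_left]
    exact lt_min (hq_lt α hα γ hγ hαγ) (hGV γ hγ hαγ)
  rcases eq_or_ne γ β with rfl | hγβ
  · rw [Function.update_of_ne hαβ, Function.update_self, T.setD_union_right]
    exact lt_min (hq_lt α hα γ hγ hαγ) (hFU α hα hαγ)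
  · rw [Function.update_of_ne hαβ, Function.update_of_ne hγβ]
    exact hq_lt α hα γ hγ hαγ
end

section
/- The forced limit operator flim : [0,1]^ℕ → [0,1], defined by flim(x) = lim x_n if (x_n) is a 'forced' Cauchy sequence (e.g. flim(x) = lim_n y_n where y is the modification forcing |y_{n+1} − y_n| ≤ 2^{−n}), is 1-Lipschitz when [0,1]^ℕ carries the supremum metric; consequently, if (g_n) is a family of continuous c-Lipschitz functions from a topometric space X to [0,1], then flim g_n is continuous and c-Lipschitz. -/
open scoped ENNReal NNReal
open Set

/-- The "forcing" modification of a sequence: `y 0 = x 0` and `y (n+1)` is `x (n+1)`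
clamped to the interval `[y n - 2⁻ⁿ, y n + 2⁻ⁿ]`, so `|y (n+1) - y n| ≤ 2⁻ⁿ` always,
and `y = x` whenever `x` already satisfies `|x (n+1) - x n| ≤ 2⁻ⁿ`. -/
noncomputable def forced (x : ℕ → ℝ) : ℕ → ℝ
  | 0 => x 0
  | n + 1 => max (forced x n - (1 / 2) ^ n) (min (forced x n + (1 / 2) ^ n) (x (n + 1)))

/-- The forced limit operator. -/
noncomputable def flim (x : ℕ → ℝ) : ℝ := Filter.limUnder Filter.atTop (forced x)

/-!
The forcing step moves the current term by at most `2⁻ⁿ`, so `forced x` converges geometrically,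
at a rate independent of `x`. Clamping `u` to `[a - e, a + e]` is `1`-Lipschitz jointly in `(a, u)`,
so by induction `forced x` and `forced y` stay as close as `x` and `y` do, and so do their limits;
the uniform rate makes `flim` of continuous functions a uniform limit of continuous functions.
-/

open Filter Topology

def clampNear (a e u : ℝ) : ℝ := max (a - e) (min (a + e) u)

section clampNear

variable {a b e u v : ℝ}

lemma abs_clampNear_sub_le (a u : ℝ) (he : 0 ≤ e) : |clampNear a e u - a| ≤ e := by
  rw [abs_sub_le_iff]
  constructor
  · exact sub_le_iff_le_add'.2 (max_le (by linarith) (min_le_left _ _))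
  · exact sub_le_comm.1 (le_max_left _ _)

lemma clampNear_eq_self (h : |u - a| ≤ e) : clampNear a e u = u := by
  obtain ⟨h₁, h₂⟩ := abs_le.1 h
  rw [clampNear, min_eq_right (by linarith), max_eq_right (by linarith)]

lemma abs_clampNear_sub_clampNear_le (a b e u v : ℝ) :
    |clampNear a e u - clampNear b e v| ≤ max |a - b| |u - v| :=
  calc |clampNear a e u - clampNear b e v|
      ≤ max |(a - e) - (b - e)| |min (a + e) u - min (b + e) v| := abs_max_sub_max_le_max _ _ _ _
    _ ≤ max |a - b| (max |(a + e) - (b + e)| |u - v|) := by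
        rw [sub_sub_sub_cancel_right]
        exact max_le_max le_rfl (abs_min_sub_min_le_max _ _ _ _)
    _ = max |a - b| |u - v| := by rw [add_sub_add_right_eq_sub, ← max_assoc, max_self]

lemma clampNear_mem_Icc {l h : ℝ} (ha : a ∈ Icc l h) (hu : u ∈ Icc l h) (he : 0 ≤ e) :
    clampNear a e u ∈ Icc l h :=
  ⟨le_max_of_le_right (le_min (by linarith [ha.1]) hu.1),
    max_le (by linarith [ha.2]) ((min_le_right _ _).trans hu.2)⟩

end clampNear

section forced

variable {x y : ℕ → ℝ}

lemma forced_succ (x : ℕ → ℝ) (n : ℕ) :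
    forced x (n + 1) = clampNear (forced x n) ((1 / 2) ^ n) (x (n + 1)) := rfl

lemma dist_forced_succ_le (x : ℕ → ℝ) (n : ℕ) :
    dist (forced x n) (forced x (n + 1)) ≤ (1 / 2 : ℝ) ^ n := by
  rw [dist_comm, Real.dist_eq, forced_succ]
  exact abs_clampNear_sub_le _ _ (by positivity)

lemma tendsto_forced_flim (x : ℕ → ℝ) : Tendsto (forced x) atTop (𝓝 (flim x)) := by
  obtain ⟨a, ha⟩ := cauchySeq_tendsto_of_complete <|
    cauchySeq_of_le_geometric (1 / 2) 1 (by norm_num)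
      (by simpa only [one_mul] using dist_forced_succ_le x)
  rwa [flim, ha.limUnder_eq]

lemma dist_forced_flim_le (x : ℕ → ℝ) (n : ℕ) :
    dist (forced x n) (flim x) ≤ 2 * (1 / 2 : ℝ) ^ n := by
  convert dist_le_of_le_geometric_of_tendsto (1 / 2) 1 (by norm_num)
    (by simpa only [one_mul] using dist_forced_succ_le x) (tendsto_forced_flim x) n using 1
  ring

lemma forced_eq_self (h : ∀ n, |x (n + 1) - x n| ≤ (1 / 2) ^ n) : forced x = x := by
  funext n
  induction n with
  | zero => rfl
  | succ n ih => rw [forced_succ, ih, clampNear_eq_self (h n)]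

lemma abs_forced_sub_forced_le {r : ℝ} (h : ∀ n, |x n - y n| ≤ r) (n : ℕ) :
    |forced x n - forced y n| ≤ r := by
  induction n with
  | zero => exact h 0
  | succ n ih =>
    rw [forced_succ, forced_succ]
    exact (abs_clampNear_sub_clampNear_le _ _ _ _ _).trans (max_le ih (h (n + 1)))

lemma abs_flim_sub_flim_le {r : ℝ} (h : ∀ n, |x n - y n| ≤ r) : |flim x - flim y| ≤ r :=
  le_of_tendsto (((tendsto_forced_flim x).sub (tendsto_forced_flim y)).abs)
    (Eventually.of_forall (abs_forced_sub_forced_le h))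

lemma edist_flim_le {r : ℝ≥0∞} (h : ∀ n, edist (x n) (y n) ≤ r) : edist (flim x) (flim y) ≤ r := by
  rcases eq_or_ne r ⊤ with rfl | hr
  · exact le_top
  rw [← ENNReal.ofReal_toReal hr, edist_le_ofReal ENNReal.toReal_nonneg, Real.dist_eq]
  refine abs_flim_sub_flim_le fun n => ?_
  rw [← Real.dist_eq, ← edist_le_ofReal ENNReal.toReal_nonneg, ENNReal.ofReal_toReal hr]
  exact h n

lemma forced_mem_Icc {l h : ℝ} (hx : ∀ n, x n ∈ Icc l h) (n : ℕ) : forced x n ∈ Icc l h := by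
  induction n with
  | zero => exact hx 0
  | succ n ih => exact clampNear_mem_Icc ih (hx (n + 1)) (by positivity)

lemma flim_mem_Icc {l h : ℝ} (hx : ∀ n, x n ∈ Icc l h) : flim x ∈ Icc l h :=
  isClosed_Icc.mem_of_tendsto (tendsto_forced_flim x) (Eventually.of_forall (forced_mem_Icc hx))

lemma tendstoUniformly_forced_flim {ι : Type*} (x : ι → ℕ → ℝ) :
    TendstoUniformly (fun k i => forced (x i) k) (fun i => flim (x i)) atTop := by
  have hrate : Tendsto (fun n : ℕ => 2 * (1 / 2 : ℝ) ^ n) atTop (𝓝 0) := by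
    simpa using (tendsto_pow_atTop_nhds_zero_of_lt_one (r := (1 / 2 : ℝ)) (by norm_num)
      (by norm_num)).const_mul 2
  rw [Metric.tendstoUniformly_iff]
  intro ε hε
  filter_upwards [hrate.eventually (gt_mem_nhds hε)] with k hk i
  rw [dist_comm]
  exact (dist_forced_flim_le (x i) k).trans_lt hk

end forced

section continuity

variable {X : Type*} [TopologicalSpace X] {g : ℕ → X → ℝ}

lemma continuous_forced (hg : ∀ n, Continuous (g n)) (k : ℕ) :
    Continuous fun p => forced (fun n => g n p) k := by
  induction k with
  | zero => exact hg 0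
  | succ k ih => exact (ih.sub continuous_const).max ((ih.add continuous_const).min (hg (k + 1)))

lemma continuous_flim (hg : ∀ n, Continuous (g n)) : Continuous fun p => flim fun n => g n p :=
  (tendstoUniformly_forced_flim fun p n => g n p).continuous
    (Frequently.of_forall (continuous_forced hg))

end continuity

/-- `flim` computes the limit of forced Cauchy sequences, is `1`-Lipschitz
for the supremum metric on `[0,1]^ℕ`, and consequently a forced limit of continuous
`c`-Lipschitz functions on a topometric space is continuous and `c`-Lipschitz. -/
theorem flim_lipschitz_and_forced_limit_of_continuous_lipschitz
    {X : Type*} [TopologicalSpace X] (T : TopometricOn X) (c : ℝ≥0) :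
    (∀ x : ℕ → ℝ, (∀ n, |x (n + 1) - x n| ≤ (1 / 2) ^ n) →
      Filter.Tendsto x Filter.atTop (nhds (flim x))) ∧
    (∀ x y : ℕ → ℝ, (∀ n, x n ∈ Set.Icc (0 : ℝ) 1) → (∀ n, y n ∈ Set.Icc (0 : ℝ) 1) →
      ∀ r : ℝ, 0 ≤ r → (∀ n, |x n - y n| ≤ r) → |flim x - flim y| ≤ r) ∧
    (∀ g : ℕ → X → ℝ, (∀ n, Continuous (g n)) →
      (∀ n, ∀ x y, edist (g n x) (g n y) ≤ (c : ℝ≥0∞) * T.d x y) →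
      (∀ n x, g n x ∈ Set.Icc (0 : ℝ) 1) →
      Continuous (fun p => flim fun n => g n p) ∧
        (∀ x y, edist (flim fun n => g n x) (flim fun n => g n y) ≤ (c : ℝ≥0∞) * T.d x y) ∧
        ∀ p, (flim fun n => g n p) ∈ Set.Icc (0 : ℝ) 1) := by
  refine ⟨fun x hx => by simpa only [forced_eq_self hx] using tendsto_forced_flim x,
    fun x y _ _ r _ h => abs_flim_sub_flim_le h, fun g hgc hgl hgm => ?_⟩
  exact ⟨continuous_flim hgc, fun x y => edist_flim_le fun n => hgl n x y,
    fun p => flim_mem_Icc fun n => hgm n p⟩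
end

section
/- Every compact topometric space is a normal topometric space. -/
open scoped ENNReal NNReal
open Set

/-!
Lower semicontinuity of `d` makes the diagonal closed, so a compact topometric space is compact
Hausdorff, hence normal; closed sets at positive distance are disjoint and are therefore separated.
Closed sets are compact, and by the tube lemma the infimum of a jointly lower semicontinuous
function over a compact set is lower semicontinuous, so `x ↦ d(x, F)` has closed sublevel sets.
-/

open Filter Topology

theorem lowerSemicontinuous_biInf_of_isCompact {α β γ : Type*} [TopologicalSpace α]
    [TopologicalSpace β] [CompleteLinearOrder γ] [DenselyOrdered γ] {f : α → β → γ}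
    (hf : LowerSemicontinuous fun p : α × β => f p.1 p.2) {K : Set β} (hK : IsCompact K) :
    LowerSemicontinuous fun x => ⨅ y ∈ K, f x y := by
  intro x c hc
  obtain ⟨c', hcc', hc'⟩ := exists_between hc
  have hnear : ∀ᶠ x' in 𝓝 x, ∀ y ∈ K, c' < f x' y :=
    hK.eventually_forall_of_forall_eventually fun y hy =>
      hf (x, y) c' (hc'.trans_le (iInf₂_le y hy))
  exact hnear.mono fun x' hx' => hcc'.trans_le (le_iInf₂ fun y hy => (hx' y hy).le)

namespace TopometricOn

variable {X : Type*} [TopologicalSpace X]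

theorem t2Space (T : TopometricOn X) : T2Space X := by
  rw [t2_iff_isClosed_diagonal]
  have hdiag : diagonal X = {p : X × X | T.d p.1 p.2 ≤ 0} := by
    ext ⟨x, y⟩
    change x = y ↔ T.d x y ≤ 0
    rw [nonpos_iff_eq_zero]
    exact ⟨fun h => h ▸ T.d_self x, T.eq_of_d_eq_zero x y⟩
  rw [hdiag]
  exact T.lsc.isClosed_preimage 0

theorem disjoint_of_setD_pos (T : TopometricOn X) {F G : Set X} (h : 0 < T.setD F G) :
    Disjoint F G :=
  disjoint_left.2 fun x hxF hxG =>
    h.ne' <| nonpos_iff_eq_zero.1 <|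
      calc T.setD F G ≤ T.d x x := (iInf₂_le x hxF).trans (iInf₂_le x hxG)
        _ = 0 := T.d_self x

theorem lowerSemicontinuous_ptD (T : TopometricOn X) {F : Set X} (hF : IsCompact F) :
    LowerSemicontinuous fun x => T.ptD x F :=
  lowerSemicontinuous_biInf_of_isCompact T.lsc hF

end TopometricOn

/-- every compact topometric space is normal. -/
theorem compact_topometric_isNormal {X : Type*} [TopologicalSpace X] [CompactSpace X]
    (T : TopometricOn X) : T.IsNormal := by
  have : T2Space X := T.t2Space
  exact ⟨fun F G hF hG hd => normal_separation hF hG (T.disjoint_of_setD_pos hd),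
    fun F hF r _ => (T.lowerSemicontinuous_ptD hF.isCompact).isClosed_preimage r⟩
end

section
/- Let X be a completely regular topometric space and ℱ = C_{L(1)}(X, ℝ⁺), the set of continuous 1-Lipschitz functions X → [0,∞). Then the map θ : X → ([0,∞))^ℱ, θ(x)(f) = f(x), where the codomain carries the product topology and supremum metric, is a topometric embedding: a homeomorphism onto its image that is also an isometry. -/
/-!
A family of continuous maps that separates points from closed sets induces the topology of its
source, so the first half of complete regularity makes evaluation at `ℱ` inducing. The second
half says that `d x y` is the supremum of `|f x - f y|` over `ℱ`: this is the isometry, and it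
forces `d x y = 0`, hence `x = y`, when all evaluations at `x` and `y` agree.
-/

open scoped ENNReal NNReal
open Set

/-- Complete regularity witnessed by continuous `1`-Lipschitz functions into `ℝ⁺`. -/
def TopometricOn.IsCompletelyRegularNN {X : Type*} [TopologicalSpace X]
    (T : TopometricOn X) : Prop :=
  (∀ F : Set X, IsClosed F → ∀ x ∉ F,
      ∃ f : X → ℝ, Continuous f ∧ (∀ a b, edist (f a) (f b) ≤ T.d a b) ∧ (∀ a, 0 ≤ f a) ∧
        ∃ t : ℝ, (∀ y ∈ F, f y = t) ∧ f x ≠ t) ∧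
  (∀ x y : X, T.d x y =
      ⨆ f : {f : X → ℝ // Continuous f ∧ (∀ a b, edist (f a) (f b) ≤ T.d a b) ∧ ∀ a, 0 ≤ f a},
        edist (f.1 x) (f.1 y))

open Topology Filter

theorem isInducing_pi_of_separates {ι X : Type*} {Y : ι → Type*} [TopologicalSpace X]
    [∀ i, TopologicalSpace (Y i)] {f : ∀ i, X → Y i} (hf : ∀ i, Continuous (f i))
    (hsep : ∀ U : Set X, IsOpen U → ∀ x ∈ U,
      ∃ i, ∃ V : Set (Y i), IsOpen V ∧ f i x ∈ V ∧ f i ⁻¹' V ⊆ U) :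
    IsInducing fun x i => f i x := by
  refine isInducing_iff_nhds.2 fun x =>
    le_antisymm (continuous_pi hf).continuousAt.le_comap fun U hU => ?_
  obtain ⟨W, hWU, hW, hxW⟩ := mem_nhds_iff.1 hU
  obtain ⟨i, V, hV, hxV, hVW⟩ := hsep W hW x hxW
  exact mem_comap.2 ⟨(· i) ⁻¹' V, (hV.preimage (continuous_apply i)).mem_nhds hxV,
    fun y hy => hWU (hVW hy)⟩

namespace TopometricOn

variable {X : Type*} [TopologicalSpace X] {T : TopometricOn X}

/-- The family `ℱ = C_{L(1)}(X, ℝ⁺)`. -/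
abbrev NonnegContLipFun (T : TopometricOn X) : Type _ :=
  {f : X → ℝ // Continuous f ∧ (∀ a b, edist (f a) (f b) ≤ T.d a b) ∧ ∀ a, 0 ≤ f a}

abbrev eval (T : TopometricOn X) : X → T.NonnegContLipFun → ℝ :=
  fun x f => f.1 x

theorem IsCompletelyRegularNN.isInducing_eval (hT : T.IsCompletelyRegularNN) :
    IsInducing T.eval := by
  refine isInducing_pi_of_separates (fun f => f.2.1) fun U hU x hxU => ?_
  obtain ⟨f, hfc, hflip, hfnn, t, hft, hxt⟩ := hT.1 Uᶜ hU.isClosed_compl x (not_not_intro hxU)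
  refine ⟨⟨f, hfc, hflip, hfnn⟩, {t}ᶜ, isOpen_compl_singleton, hxt, fun y hy => ?_⟩
  by_contra hyU
  exact hy (hft y hyU)

theorem IsCompletelyRegularNN.eval_injective (hT : T.IsCompletelyRegularNN) :
    Function.Injective T.eval := by
  intro x y hxy
  refine T.eq_of_d_eq_zero x y ?_
  rw [hT.2 x y, ENNReal.iSup_eq_zero]
  intro f
  rw [show f.1 x = f.1 y from congrFun hxy f, edist_self]

end TopometricOn

/-- the evaluation map of a completely regular topometric space into
`(ℝ⁺)^ℱ`, `ℱ` the continuous `1`-Lipschitz functions into `ℝ⁺`, is a topometric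
embedding: a topological embedding which is an isometry for the supremum metric. -/
theorem completelyRegular_evaluation_topometric_embedding {X : Type*} [TopologicalSpace X]
    (T : TopometricOn X) (hT : T.IsCompletelyRegularNN) :
    Topology.IsEmbedding (fun x : X =>
      fun f : {f : X → ℝ // Continuous f ∧ (∀ a b, edist (f a) (f b) ≤ T.d a b) ∧ ∀ a, 0 ≤ f a} =>
        f.1 x) ∧
    ∀ x y : X, T.d x y =
      ⨆ f : {f : X → ℝ // Continuous f ∧ (∀ a b, edist (f a) (f b) ≤ T.d a b) ∧ ∀ a, 0 ≤ f a},
        edist (f.1 x) (f.1 y) :=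
  ⟨⟨hT.isInducing_eval, hT.eval_injective⟩, hT.2⟩
end
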